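/- arXiv:2406.15384 — 3 statements merged into one kernel-verified Lean document; each statement's English description precedes it below -/
import Mathlib

section
/- If F ⊆ ℝⁿ is a nonempty compact convex set and z ∉ F, then the maximizer ψ* ∈ Sₙ of ψ ↦ ⟨z, ψ⟩ − c(F, ψ) over the unit sphere Sₙ is unique, and equals (z − p)/‖z − p‖ where p is the metric projection of z onto F. -/
/-- The support function `c(F, ψ) = sup_{f ∈ F} ⟨f, ψ⟩` of a set `F ⊆ ℝⁿ`. -/
noncomputable def supportFn {n : ℕ} (F : Set (EuclideanSpace ℝ (Fin n)))
    (ψ : EuclideanSpace ℝ (Fin n)) : ℝ :=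
  sSup ((fun f => (inner ℝ f ψ : ℝ)) '' F)

/-!
The projection inequality `⟪z - p, f - p⟫ ≤ 0` on `F` says that `ψ* = (z - p)/‖z - p‖` is an
outer normal of `F` at `p`, so `c(F, ψ*) = ⟪p, ψ*⟫` and the objective at `ψ*` equals `‖z - p‖`.
For any unit `ψ`, `c(F, ψ) ≥ ⟪p, ψ⟫` bounds the objective by `⟪z - p, ψ⟫ ≤ ‖z - p‖`, and equality
in Cauchy–Schwarz forces `ψ = ψ*`.
-/

open scoped RealInnerProductSpace

section InnerProductSpace

variable {E : Type*} [NormedAddCommGroup E] [InnerProductSpace ℝ E]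

theorem real_inner_sub_sub_nonpos_of_forall_dist_le {K : Set E} (hK : Convex ℝ K) {z p : E}
    (hp : p ∈ K) (hmin : ∀ y ∈ K, dist z p ≤ dist z y) : ∀ f ∈ K, ⟪z - p, f - p⟫ ≤ 0 := by
  have : Nonempty K := ⟨⟨p, hp⟩⟩
  refine (norm_eq_iInf_iff_real_inner_le_zero hK hp).mp
    (le_antisymm (le_ciInf fun w => ?_) (ciInf_le ⟨0, ?_⟩ (⟨p, hp⟩ : K)))
  · simpa [dist_eq_norm] using hmin w w.2
  · rintro _ ⟨w, rfl⟩
    positivity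

theorem eq_inv_norm_smul_of_norm_le_inner {v ψ : E} (hv : v ≠ 0) (hψ : ‖ψ‖ = 1)
    (h : ‖v‖ ≤ ⟪v, ψ⟫) : ψ = ‖v‖⁻¹ • v := by
  have heq : ⟪v, ψ⟫ = ‖v‖ * ‖ψ‖ := by
    rw [hψ, mul_one]
    exact le_antisymm (by simpa [hψ] using real_inner_le_norm v ψ) h
  have hsmul := inner_eq_norm_mul_iff_real.mp heq
  rw [hψ, one_smul] at hsmul
  calc ψ = ‖v‖⁻¹ • ‖v‖ • ψ := (inv_smul_smul₀ (norm_ne_zero_iff.mpr hv) ψ).symm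
    _ = ‖v‖⁻¹ • v := by rw [← hsmul]

end InnerProductSpace

section SupportFunction

variable {n : ℕ} {F : Set (EuclideanSpace ℝ (Fin n))}

theorem IsCompact.inner_le_supportFn (hF : IsCompact F) {f : EuclideanSpace ℝ (Fin n)}
    (hf : f ∈ F) (φ : EuclideanSpace ℝ (Fin n)) : ⟪f, φ⟫ ≤ supportFn F φ :=
  le_csSup (hF.image (continuous_id.inner continuous_const)).bddAbove ⟨f, hf, rfl⟩

theorem supportFn_eq_of_forall_inner_le {p ψ : EuclideanSpace ℝ (Fin n)} (hp : p ∈ F)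
    (h : ∀ f ∈ F, ⟪f, ψ⟫ ≤ ⟪p, ψ⟫) : supportFn F ψ = ⟪p, ψ⟫ :=
  le_antisymm (csSup_le ⟨_, p, hp, rfl⟩ (by rintro _ ⟨f, hf, rfl⟩; exact h f hf))
    (le_csSup ⟨_, by rintro _ ⟨f, hf, rfl⟩; exact h f hf⟩ ⟨p, hp, rfl⟩)

theorem IsCompact.inner_sub_supportFn_le (hF : IsCompact F) {p : EuclideanSpace ℝ (Fin n)}
    (hp : p ∈ F) (z φ : EuclideanSpace ℝ (Fin n)) :
    ⟪z, φ⟫ - supportFn F φ ≤ ⟪z - p, φ⟫ := by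
  rw [inner_sub_left]
  linarith [hF.inner_le_supportFn hp φ]

theorem inner_sub_supportFn_inv_norm_smul_of_forall_dist_le (hF : Convex ℝ F)
    {z p : EuclideanSpace ℝ (Fin n)} (hp : p ∈ F) (hmin : ∀ y ∈ F, dist z p ≤ dist z y) :
    ⟪z, ‖z - p‖⁻¹ • (z - p)⟫ - supportFn F (‖z - p‖⁻¹ • (z - p)) = ‖z - p‖ := by
  have hnormal : ∀ f ∈ F, ⟪f, ‖z - p‖⁻¹ • (z - p)⟫ ≤ ⟪p, ‖z - p‖⁻¹ • (z - p)⟫ := by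
    intro f hf
    have hproj := real_inner_sub_sub_nonpos_of_forall_dist_le hF hp hmin f hf
    rw [← sub_nonpos, ← inner_sub_left, real_inner_smul_right, real_inner_comm]
    exact mul_nonpos_of_nonneg_of_nonpos (by positivity) hproj
  rw [supportFn_eq_of_forall_inner_le hp hnormal, ← inner_sub_left, real_inner_smul_right,
    real_inner_self_eq_norm_sq]
  rcases eq_or_ne ‖z - p‖ 0 with h | h
  · simp [h]
  · field_simp

end SupportFunction

theorem unique_maximizer_of_not_mem_general (n : ℕ) (F : Set (EuclideanSpace ℝ (Fin n)))
    (hc : IsCompact F) (hconv : Convex ℝ F)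
    (z : EuclideanSpace ℝ (Fin n)) (hz : z ∉ F)
    (p : EuclideanSpace ℝ (Fin n)) (hp : p ∈ F) (hpmin : ∀ y ∈ F, dist z p ≤ dist z y) :
    (‖(‖z - p‖)⁻¹ • (z - p)‖ = 1 ∧
      ∀ φ : EuclideanSpace ℝ (Fin n), ‖φ‖ = 1 →
        (inner ℝ z φ : ℝ) - supportFn F φ ≤
          (inner ℝ z ((‖z - p‖)⁻¹ • (z - p)) : ℝ) - supportFn F ((‖z - p‖)⁻¹ • (z - p))) ∧
    ∀ ψ : EuclideanSpace ℝ (Fin n), ‖ψ‖ = 1 →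
      (∀ φ : EuclideanSpace ℝ (Fin n), ‖φ‖ = 1 →
        (inner ℝ z φ : ℝ) - supportFn F φ ≤ (inner ℝ z ψ : ℝ) - supportFn F ψ) →
      ψ = (‖z - p‖)⁻¹ • (z - p) := by
  have hzp : z - p ≠ 0 := sub_ne_zero.mpr fun h => hz (h ▸ hp)
  have hunit : ‖‖z - p‖⁻¹ • (z - p)‖ = 1 := norm_smul_inv_norm hzp
  have hval := inner_sub_supportFn_inv_norm_smul_of_forall_dist_le hconv hp hpmin
  have hbound : ∀ φ : EuclideanSpace ℝ (Fin n), ‖φ‖ = 1 → ⟪z, φ⟫ - supportFn F φ ≤ ‖z - p‖ :=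
    fun φ hφ => (hc.inner_sub_supportFn_le hp z φ).trans
      (by simpa [hφ] using real_inner_le_norm (z - p) φ)
  refine ⟨⟨hunit, fun φ hφ => (hbound φ hφ).trans_eq hval.symm⟩, fun ψ hψ hmax => ?_⟩
  refine eq_inv_norm_smul_of_norm_le_inner hzp hψ ?_
  calc ‖z - p‖ = _ := hval.symm
    _ ≤ ⟪z, ψ⟫ - supportFn F ψ := hmax _ hunit
    _ ≤ ⟪z - p, ψ⟫ := hc.inner_sub_supportFn_le hp z ψ

/-- If `z ∉ F` then the maximizer over the unit sphere of `ψ ↦ ⟨z, ψ⟩ − c(F, ψ)` is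
unique and equals `(z − p)/‖z − p‖`, where `p` is the metric projection of `z` onto `F`. -/
theorem unique_maximizer_of_not_mem (n : ℕ) (F : Set (EuclideanSpace ℝ (Fin n)))
    (hc : IsCompact F) (hconv : Convex ℝ F) (hne : F.Nonempty)
    (z : EuclideanSpace ℝ (Fin n)) (hz : z ∉ F)
    (p : EuclideanSpace ℝ (Fin n)) (hp : p ∈ F) (hpmin : ∀ y ∈ F, dist z p ≤ dist z y) :
    (‖(‖z - p‖)⁻¹ • (z - p)‖ = 1 ∧
      ∀ φ : EuclideanSpace ℝ (Fin n), ‖φ‖ = 1 →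
        (inner ℝ z φ : ℝ) - supportFn F φ ≤
          (inner ℝ z ((‖z - p‖)⁻¹ • (z - p)) : ℝ) - supportFn F ((‖z - p‖)⁻¹ • (z - p))) ∧
    ∀ ψ : EuclideanSpace ℝ (Fin n), ‖ψ‖ = 1 →
      (∀ φ : EuclideanSpace ℝ (Fin n), ‖φ‖ = 1 →
        (inner ℝ z φ : ℝ) - supportFn F φ ≤ (inner ℝ z ψ : ℝ) - supportFn F ψ) →
      ψ = (‖z - p‖)⁻¹ • (z - p) :=
  unique_maximizer_of_not_mem_general n F hc hconv z hz p hp hpmin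
end

section
/- Let F₁ = B₁((−1,0)) and F₂ = B₁((1,0)) be closed unit disks in ℝ² and z = (0,1). Then max_{ψ ∈ S₂} (ψ₂ − min{−ψ₁ + 1, ψ₁ + 1}) = √2 − 1, and this maximum is attained at exactly the two points ψ = (√2/2, √2/2) and ψ = (−√2/2, √2/2). -/
/-- For `F₁ = B₁((−1,0))`, `F₂ = B₁((1,0))` and `z = (0,1)`, the maximum over the unit
circle of `ψ₂ − min{−ψ₁ + 1, ψ₁ + 1}` equals `√2 − 1`, attained exactly at
`(√2/2, √2/2)` and `(−√2/2, √2/2)`. -/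
theorem max_dist_two_balls :
    IsGreatest
      {v : ℝ | ∃ ψ : ℝ × ℝ, ψ.1 ^ 2 + ψ.2 ^ 2 = 1 ∧
        v = ψ.2 - min (-ψ.1 + 1) (ψ.1 + 1)} (Real.sqrt 2 - 1) ∧
    ∀ ψ : ℝ × ℝ, ψ.1 ^ 2 + ψ.2 ^ 2 = 1 →
      (ψ.2 - min (-ψ.1 + 1) (ψ.1 + 1) = Real.sqrt 2 - 1 ↔
        ψ = (Real.sqrt 2 / 2, Real.sqrt 2 / 2) ∨
          ψ = (-(Real.sqrt 2) / 2, Real.sqrt 2 / 2)) := by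
  have hs2 : Real.sqrt 2 ^ 2 = 2 := Real.sq_sqrt (by norm_num)
  have hs0 : (0:ℝ) < Real.sqrt 2 := Real.sqrt_pos.mpr (by norm_num)
  set s := Real.sqrt 2 with hsdef
  have hmin : ∀ x : ℝ, min (-x + 1) (x + 1) = 1 - |x| := by
    intro x
    rcases abs_cases x with ⟨h1, h2⟩ | ⟨h1, h2⟩ <;>
      rcases min_cases (-x + 1) (x + 1) with ⟨h3, h4⟩ | ⟨h3, h4⟩ <;> linarith
  constructor
  · constructor
    · refine ⟨(s / 2, s / 2), ?_, ?_⟩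
      · simp only
        linear_combination hs2 / 2
      · simp only [hmin]
        rw [abs_of_nonneg (by positivity)]
        ring
    · rintro v ⟨ψ, hψ, rfl⟩
      rw [hmin]
      have h := sq_abs ψ.1
      have h2 := abs_nonneg ψ.1
      nlinarith [sq_nonneg (|ψ.1| + ψ.2 - s), sq_nonneg (|ψ.1| - ψ.2)]
  · intro ψ hψ
    rw [hmin]
    constructor
    · intro h
      have habs : ψ.2 + |ψ.1| = s := by linarith
      have hsq := sq_abs ψ.1
      have hzero : (|ψ.1| - ψ.2) ^ 2 = 0 := by nlinarith
      have h1 : |ψ.1| = ψ.2 := by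
        have := pow_eq_zero_iff (two_ne_zero) |>.mp hzero
        linarith
      have hfac : (ψ.2 - s / 2) * (ψ.2 + s / 2) = 0 := by nlinarith
      have h2 : ψ.2 = s / 2 := by
        rcases mul_eq_zero.mp hfac with h' | h'
        · linarith
        · exfalso; have := abs_nonneg ψ.1; linarith
      rcases abs_cases ψ.1 with ⟨ha, _⟩ | ⟨ha, _⟩
      · left
        rw [Prod.ext_iff]
        constructor <;> simp <;> linarith
      · right
        rw [Prod.ext_iff]
        constructor <;> simp <;> linarith
    · rintro (rfl | rfl) <;> simp only [hmin]
      · rw [abs_of_nonneg (by positivity)]; ring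
      · rw [abs_of_nonpos (by linarith), neg_div, neg_neg]; ring
end

section
/- Suppose f_i : ℝⁿ×ℝⁿ → ℝ, i = 1..M, are continuously differentiable, f(y) = max_i f_i(y), and Δ > 0. If y* is a Δ-stationary point, i.e. for every unit direction d one has max_{i ∈ R_Δ(y*)} ⟨∇f_i(y*), d⟩ ≥ 0 where R_Δ(y*) = {i : f(y*) − f_i(y*) ≤ Δ}, and each f_i with i ∈ R_Δ(y*) is convex, then f(y*) − inf_{y ∈ ℝⁿ×ℝⁿ} f(y) ≤ Δ. -/
/-!
Restricted to the segment from `y` to `w`, a convex differentiable function lies above its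
tangent line, so `f i y ≤ f i w` as soon as the derivative of `f i` at `y` is nonnegative in the
direction `w - y`.
Stationarity supplies such an index `i` among the `Δ`-active ones, whence
`f y - Δ ≤ f i y ≤ f i w ≤ f w` for every `w`.
-/

open Finset

theorem ConvexOn.apply_sub_le_of_hasFDerivAt {E : Type*} [NormedAddCommGroup E]
    [NormedSpace ℝ E] {s : Set E} {g : E → ℝ} {g' : E →L[ℝ] ℝ} {x y : E}
    (hg : ConvexOn ℝ s g) (hx : x ∈ s) (hy : y ∈ s) (hg' : HasFDerivAt g g' x) :
    g' (y - x) ≤ g y - g x := by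
  have hline : ConvexOn ℝ (AffineMap.lineMap (k := ℝ) x y ⁻¹' s)
      (g ∘ AffineMap.lineMap (k := ℝ) x y) :=
    hg.comp_affineMap _
  have hderiv : HasDerivAt (g ∘ AffineMap.lineMap (k := ℝ) x y) (g' (y - x)) 0 := by
    have hg'0 : HasFDerivAt g g' (AffineMap.lineMap x y (0 : ℝ)) := by simpa using hg'
    exact hg'0.comp_hasDerivAt 0 AffineMap.hasDerivAt_lineMap
  simpa [slope_def_field] using
    hline.le_slope_of_hasDerivAt (x := 0) (y := 1) (by simpa using hx) (by simpa using hy)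
      zero_lt_one hderiv

section DeltaStationary

variable {ι E : Type*} [Fintype ι] [Nonempty ι] [NormedAddCommGroup E] [NormedSpace ℝ E]

/-- The paper's `R_Δ(y)`. -/
def deltaActive (f : ι → E → ℝ) (Δ : ℝ) (y : E) : Set ι :=
  {i | univ.sup' univ_nonempty (fun k => f k y) - f i y ≤ Δ}

def IsDeltaStationary (f : ι → E → ℝ) (Δ : ℝ) (y : E) : Prop :=
  ∀ d : E, ‖d‖ = 1 → ∃ i ∈ deltaActive f Δ y, 0 ≤ fderiv ℝ (f i) y d

theorem IsDeltaStationary.exists_fderiv_nonneg {f : ι → E → ℝ} {Δ : ℝ} {y : E}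
    (hstat : IsDeltaStationary f Δ y) {v : E} (hv : v ≠ 0) :
    ∃ i ∈ deltaActive f Δ y, 0 ≤ fderiv ℝ (f i) y v := by
  have hnorm : ‖v‖ ≠ 0 := norm_ne_zero_iff.mpr hv
  obtain ⟨i, hi, hnonneg⟩ := hstat (‖v‖⁻¹ • v) (by rw [norm_smul, norm_inv, norm_norm,
    inv_mul_cancel₀ hnorm])
  refine ⟨i, hi, ?_⟩
  rw [map_smul, smul_eq_mul] at hnonneg
  exact nonneg_of_mul_nonneg_right hnonneg (inv_pos.mpr (norm_pos_iff.mpr hv))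

theorem IsDeltaStationary.sup'_sub_le {f : ι → E → ℝ} {Δ : ℝ} {y : E}
    (hstat : IsDeltaStationary f Δ y) (hΔ : 0 ≤ Δ) (hdiff : ∀ i, DifferentiableAt ℝ (f i) y)
    (hconv : ∀ i ∈ deltaActive f Δ y, ConvexOn ℝ Set.univ (f i)) (w : E) :
    univ.sup' univ_nonempty (fun k => f k y) - Δ ≤ univ.sup' univ_nonempty (fun k => f k w) := by
  rcases eq_or_ne w y with rfl | hwy
  · linarith
  obtain ⟨i, hi, hnonneg⟩ := hstat.exists_fderiv_nonneg (sub_ne_zero.mpr hwy)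
  have htangent := (hconv i hi).apply_sub_le_of_hasFDerivAt (Set.mem_univ y) (Set.mem_univ w)
    (hdiff i).hasFDerivAt
  have hle_sup : f i w ≤ univ.sup' univ_nonempty (fun k => f k w) :=
    le_sup' (fun k => f k w) (mem_univ i)
  have hactive : univ.sup' univ_nonempty (fun k => f k y) - f i y ≤ Δ := hi
  linarith

end DeltaStationary

theorem delta_stationary_near_min_general (n M : ℕ) [NeZero M]
    (f : Fin M → (EuclideanSpace ℝ (Fin n) × EuclideanSpace ℝ (Fin n)) → ℝ)
    (hf : ∀ i, ContDiff ℝ 1 (f i)) (Δ : ℝ) (hΔ : 0 < Δ)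
    (y : EuclideanSpace ℝ (Fin n) × EuclideanSpace ℝ (Fin n))
    (hconv : ∀ i, Finset.univ.sup' Finset.univ_nonempty (fun k => f k y) - f i y ≤ Δ →
      ConvexOn ℝ Set.univ (f i))
    (hstat : ∀ d : EuclideanSpace ℝ (Fin n) × EuclideanSpace ℝ (Fin n), ‖d‖ = 1 →
      ∃ i, Finset.univ.sup' Finset.univ_nonempty (fun k => f k y) - f i y ≤ Δ ∧
        0 ≤ fderiv ℝ (f i) y d) :
    Finset.univ.sup' Finset.univ_nonempty (fun k => f k y) -
      sInf (Set.range fun w => Finset.univ.sup' Finset.univ_nonempty (fun k => f k w)) ≤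
      Δ := by
  have hstat' : IsDeltaStationary f Δ y := hstat
  have hdiff i : DifferentiableAt ℝ (f i) y := (hf i).differentiable one_ne_zero y
  have hlower := hstat'.sup'_sub_le hΔ.le hdiff hconv
  have hle_inf := le_csInf (Set.range_nonempty _) (Set.forall_mem_range.mpr hlower)
  linarith

/-- If `y` is a `Δ`-stationary point of `f = max_i f_i` (for every unit direction some
`Δ`-active index has nonnegative directional derivative) and the `Δ`-active `f_i` are
convex, then `f(y) − inf f ≤ Δ`. -/
theorem delta_stationary_near_min (n M : ℕ) [NeZero M]
    (f : Fin M → (EuclideanSpace ℝ (Fin n) × EuclideanSpace ℝ (Fin n)) → ℝ)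
    (hf : ∀ i, ContDiff ℝ 1 (f i)) (Δ : ℝ) (hΔ : 0 < Δ)
    (y : EuclideanSpace ℝ (Fin n) × EuclideanSpace ℝ (Fin n))
    (hconv : ∀ i, Finset.univ.sup' Finset.univ_nonempty (fun k => f k y) - f i y ≤ Δ →
      ConvexOn ℝ Set.univ (f i))
    (hbdd : BddBelow (Set.range fun w => Finset.univ.sup' Finset.univ_nonempty
      (fun k => f k w)))
    (hstat : ∀ d : EuclideanSpace ℝ (Fin n) × EuclideanSpace ℝ (Fin n), ‖d‖ = 1 →
      ∃ i, Finset.univ.sup' Finset.univ_nonempty (fun k => f k y) - f i y ≤ Δ ∧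
        0 ≤ fderiv ℝ (f i) y d) :
    Finset.univ.sup' Finset.univ_nonempty (fun k => f k y) -
      sInf (Set.range fun w => Finset.univ.sup' Finset.univ_nonempty (fun k => f k w)) ≤
      Δ :=
  delta_stationary_near_min_general n M f hf Δ hΔ y hconv hstat
end
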